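/- arXiv:1701.08144 — 2 statements merged into one kernel-verified Lean document; each statement's English description precedes it below -/
import Mathlib

section
/- Let K be a field of characteristic 2, let H be a ℤ-graded graded-commutative unital K-algebra, and let a₀ ∈ H. Suppose b₁, b₂, b₄, b₅ are formal symbols of degree 0 and we are given: a bilinear 'product' μ² on the span of {b₁,…,b₆, a₀} with μ²(b₄,b₁) = μ²(b₂,b₅) = μ²(b₅,b₂) = μ²(b₁,b₄) = a₀ and μ²(bᵢ,bⱼ) = 0 whenever |i−j| ≠ 3; linear maps F¹ : span → H, F² : span⊗span → H[−1], F³ : span⊗span⊗span → H[−2]; and for each quadruple (i,j,k,l) the equation Eq_{(i,j,k,l)}: F¹(μ⁴(b_i,b_j,b_k,b_l)) = F³(b_i,b_j,b_k)·F¹(b_l) + F¹(b_i)·F³(b_j,b_k,b_l) + F²(b_i,b_j)·F²(b_k,b_l) + F³(μ²(b_i,b_j), b_k, b_l) + F³(b_i, μ²(b_j,b_k), b_l) + F³(b_i, b_j, μ²(b_k,b_l)). If the sum of μ⁴(b_i,b_j,b_k,b_l) over the ten quadruples consisting of all cyclic permutations of (b₁,b₂,b₅,b₄), of (b₁,b₅,b₂,b₄),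 and of (b₂,b₅,b₂,b₅) equals a₀, then summing the ten equations Eq over these quadruples forces F¹(a₀) = 0. -/
/-- the key cancellation lemma.  Over a field `K` of characteristic 2, let
`H` be a (graded-)commutative unital `K`-algebra (in characteristic 2 the product is
commutative).  The span of `b₁,…,b₆,a₀` is indexed by `Fin 7` (`b₁,…,b₆ = 0,…,5`,
`a₀ = 6`); `μ²(b₄,b₁) = μ²(b₂,b₅) = μ²(b₅,b₂) = μ²(b₁,b₄) = a₀` and `μ²(bᵢ,bⱼ) = 0`
when `|i−j| ≠ 3` is encoded by the coefficient function `m` (μ² lands in `K·a₀`).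
`f1, f2, f3` are the values of `F¹, F², F³` on basis elements (`f2` landing in odd
degree `H[−1]`, so graded-commutativity gives `f2 · f2 = 0` on equal arguments), and
`g4 i j k l = F¹(μ⁴(bᵢ,bⱼ,b_k,b_l))`.  If each equation `Eq_{(i,j,k,l)}` holds and the
sum of the `μ⁴`'s over the ten quadruples (all cyclic permutations of `(b₁,b₂,b₅,b₄)`,
`(b₁,b₅,b₂,b₄)` and `(b₂,b₅,b₂,b₅)`) equals `a₀`, then `F¹(a₀) = 0`. -/
theorem stmt_8 (K H : Type*) [Field K] [CharP K 2] [CommRing H] [Algebra K H]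
    (f1 : Fin 7 → H) (f2 : Fin 7 → Fin 7 → H) (f3 : Fin 7 → Fin 7 → Fin 7 → H)
    (g4 : Fin 6 → Fin 6 → Fin 6 → Fin 6 → H) (m : Fin 6 → Fin 6 → K)
    (hm1 : m 0 3 = 1) (hm2 : m 3 0 = 1) (hm3 : m 1 4 = 1) (hm4 : m 4 1 = 1)
    (hm0 : ∀ i j : Fin 6, ¬((i : ℕ) + 3 = (j : ℕ) ∨ (j : ℕ) + 3 = (i : ℕ)) → m i j = 0)
    (hodd : ∀ i j : Fin 6, f2 i.castSucc j.castSucc * f2 i.castSucc j.castSucc = 0)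
    (heq : ∀ i j k l : Fin 6, g4 i j k l =
        f3 i.castSucc j.castSucc k.castSucc * f1 l.castSucc
      + f1 i.castSucc * f3 j.castSucc k.castSucc l.castSucc
      + f2 i.castSucc j.castSucc * f2 k.castSucc l.castSucc
      + m i j • f3 6 k.castSucc l.castSucc
      + m j k • f3 i.castSucc 6 l.castSucc
      + m k l • f3 i.castSucc j.castSucc 6)
    (hsum : g4 0 1 4 3 + g4 1 4 3 0 + g4 4 3 0 1 + g4 3 0 1 4
          + g4 0 4 1 3 + g4 4 1 3 0 + g4 1 3 0 4 + g4 3 0 4 1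
          + g4 1 4 1 4 + g4 4 1 4 1 = f1 6) :
    f1 6 = 0 := by
  have h2 : (2 : H) = 0 := by
    have hK : (2 : K) = 0 := by
      have := CharP.cast_eq_zero K 2
      exact_mod_cast this
    calc (2 : H) = algebraMap K H 2 := by rw [map_ofNat]
    _ = algebraMap K H 0 := by rw [hK]
    _ = 0 := map_zero _
  have z01 : m 0 1 = 0 := hm0 0 1 (by decide)
  have z43 : m 4 3 = 0 := hm0 4 3 (by decide)
  have z04 : m 0 4 = 0 := hm0 0 4 (by decide)
  have z13 : m 1 3 = 0 := hm0 1 3 (by decide)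
  simp only [heq, hm1, hm2, hm3, hm4, z01, z43, z04, z13, one_smul, zero_smul,
    add_zero, zero_add] at hsum
  linear_combination -hsum + hodd 1 4 + hodd 4 1 +
    (f3 (0:Fin 6).castSucc (1:Fin 6).castSucc (4:Fin 6).castSucc * f1 (3:Fin 6).castSucc
    + f1 (0:Fin 6).castSucc * f3 (1:Fin 6).castSucc (4:Fin 6).castSucc (3:Fin 6).castSucc
    + f1 (1:Fin 6).castSucc * f3 (4:Fin 6).castSucc (3:Fin 6).castSucc (0:Fin 6).castSucc
    + f1 (4:Fin 6).castSucc * f3 (3:Fin 6).castSucc (0:Fin 6).castSucc (1:Fin 6).castSucc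
    + f3 (0:Fin 6).castSucc (4:Fin 6).castSucc (1:Fin 6).castSucc * f1 (3:Fin 6).castSucc
    + f1 (0:Fin 6).castSucc * f3 (4:Fin 6).castSucc (1:Fin 6).castSucc (3:Fin 6).castSucc
    + f1 (4:Fin 6).castSucc * f3 (1:Fin 6).castSucc (3:Fin 6).castSucc (0:Fin 6).castSucc
    + f1 (1:Fin 6).castSucc * f3 (3:Fin 6).castSucc (0:Fin 6).castSucc (4:Fin 6).castSucc
    + f3 (1:Fin 6).castSucc (4:Fin 6).castSucc (1:Fin 6).castSucc * f1 (4:Fin 6).castSucc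
    + f1 (1:Fin 6).castSucc * f3 (4:Fin 6).castSucc (1:Fin 6).castSucc (4:Fin 6).castSucc
    + f2 (0:Fin 6).castSucc (1:Fin 6).castSucc * f2 (4:Fin 6).castSucc (3:Fin 6).castSucc
    + f2 (1:Fin 6).castSucc (4:Fin 6).castSucc * f2 (3:Fin 6).castSucc (0:Fin 6).castSucc
    + f2 (0:Fin 6).castSucc (4:Fin 6).castSucc * f2 (1:Fin 6).castSucc (3:Fin 6).castSucc
    + f2 (4:Fin 6).castSucc (1:Fin 6).castSucc * f2 (3:Fin 6).castSucc (0:Fin 6).castSucc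
    + f3 (0:Fin 6).castSucc 6 (3:Fin 6).castSucc
    + f3 6 (3:Fin 6).castSucc (0:Fin 6).castSucc
    + f3 (1:Fin 6).castSucc (4:Fin 6).castSucc 6
    + f3 (4:Fin 6).castSucc 6 (1:Fin 6).castSucc
    + f3 6 (1:Fin 6).castSucc (4:Fin 6).castSucc
    + f3 (3:Fin 6).castSucc (0:Fin 6).castSucc 6
    + f3 (4:Fin 6).castSucc (1:Fin 6).castSucc 6
    + f3 (1:Fin 6).castSucc 6 (4:Fin 6).castSucc
    + f3 6 (4:Fin 6).castSucc (1:Fin 6).castSucc) * h2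
end

section
/- Let K be a field, and consider the minimal A∞-algebra 𝒜 over K with basis {1, a₀, b₁, …, b₆} where 1 is a strict unit, |a₀| = 2, and all bᵢ have degree 0 (the case p = q, r = s = p + 1). The only nontrivial products not involving the unit are μ²(b₁,b₄) = μ²(b₂,b₅) = μ²(b₆,b₃) = (−1)^{p+1} a₀, μ²(b₄,b₁) = μ²(b₅,b₂) = μ²(b₃,b₆) = (−1)^p a₀, and the μ⁴ products listed below; all μ³ products vanish. Then 𝒜 satisfies the A∞-associativity equations. The μ⁴ products are: for p even, μ⁴(b₄,b₁,b₂,b₅) = a₀, μ⁴(b₅,b₂,b₄,b₁) = μ⁴(b₅,b₂,b₅,b₂) = −a₀; for p odd, μ⁴(b₄,b₁,b₂,b₅) = μ⁴(b₄,b₁,b₅,b₂) = a₀, μ⁴(b₂,b₅,b₂,b₅) = −a₀. -/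
namespace Stmt10

variable (K : Type*) [Field K]

/-- The underlying space of the minimal A∞-algebra `𝒜`: basis indexed by `Fin 8`, with
`0 ↦ 1` (the strict unit), `1 ↦ a₀`, and `2,…,7 ↦ b₁,…,b₆`. -/
abbrev V (K : Type*) [Field K] : Type _ := Fin 8 → K

/-- Basis vectors. -/
def e (g : Fin 8) : V K := Pi.single g 1

/-- Gradings: `|1| = 0`, `|a₀| = 2`, `|bᵢ| = 0`. -/
def deg : Fin 8 → ℤ := fun g => if g = 1 then 2 else 0

/-- Structure constants of `μ²` on the `b`-generators: `μ²(b₁,b₄) = μ²(b₂,b₅) =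
μ²(b₆,b₃) = (−1)^{p+1} a₀` and `μ²(b₄,b₁) = μ²(b₅,b₂) = μ²(b₃,b₆) = (−1)^p a₀`
(indices: `b₁,…,b₆ = 2,…,7`). -/
def c (p : ℕ) (i j : Fin 8) : K :=
  if (i, j) = (2, 5) ∨ (i, j) = (3, 6) ∨ (i, j) = (7, 4) then (-1 : K) ^ (p + 1)
  else if (i, j) = (5, 2) ∨ (i, j) = (6, 3) ∨ (i, j) = (4, 7) then (-1 : K) ^ p
  else 0

/-- Structure constants of `μ⁴`: for `p` even, `μ⁴(b₄,b₁,b₂,b₅) = a₀`,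
`μ⁴(b₅,b₂,b₄,b₁) = μ⁴(b₅,b₂,b₅,b₂) = −a₀`; for `p` odd, `μ⁴(b₄,b₁,b₂,b₅) =
μ⁴(b₄,b₁,b₅,b₂) = a₀`, `μ⁴(b₂,b₅,b₂,b₅) = −a₀`; all other `μ⁴` vanish. -/
def d4 (p : ℕ) (i j k l : Fin 8) : K :=
  if p % 2 = 0 then
    (if (i, j, k, l) = (5, 2, 3, 6) then 1
     else if (i, j, k, l) = (6, 3, 5, 2) then -1
     else if (i, j, k, l) = (6, 3, 6, 3) then -1 else 0)
  else
    (if (i, j, k, l) = (5, 2, 3, 6) then 1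
     else if (i, j, k, l) = (5, 2, 6, 3) then 1
     else if (i, j, k, l) = (3, 6, 3, 6) then -1 else 0)

/-- The A∞-operations of `𝒜` (multilinear by construction), reading the `d` arguments
left to right as `v 0, …, v (d−1)`:  `μ¹ = 0`, `μ³ = 0`, `μ^d = 0` for `d ≥ 5`;
`μ²` is determined by strict unitality (`1 = e 0`) and the `c`-constants; `μ⁴` is
determined by the `d4`-constants (so `μ^d` for `d ≥ 3` vanishes whenever an argument is
the unit, and all products with an `a₀` input vanish). -/
def mu (p : ℕ) : (d : ℕ) → (ℕ → V K) → V K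
  | 2, v => v 0 0 • v 1 + v 1 0 • v 0 - (v 0 0 * v 1 0) • e K 0 +
      (∑ i : Fin 8, ∑ j : Fin 8, c K p i j * v 0 i * v 1 j) • e K 1
  | 4, v => (∑ i : Fin 8, ∑ j : Fin 8, ∑ k : Fin 8, ∑ l : Fin 8,
      d4 K p i j k l * v 0 i * v 1 j * v 2 k * v 3 l) • e K 1
  | _, _ => 0

def m2 (p : ℕ) (x y : V K) : V K :=
  x 0 • y + y 0 • x - (x 0 * y 0) • e K 0 +
    (∑ i : Fin 8, ∑ j : Fin 8, c K p i j * x i * y j) • e K 1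

def m4 (p : ℕ) (x y z w : V K) : V K :=
  (∑ i : Fin 8, ∑ j : Fin 8, ∑ k : Fin 8, ∑ l : Fin 8,
      d4 K p i j k l * x i * y j * z k * w l) • e K 1

lemma mu2_eq (p : ℕ) (v : ℕ → V K) : mu K p 2 v = m2 K p (v 0) (v 1) := rfl
lemma mu4_eq (p : ℕ) (v : ℕ → V K) : mu K p 4 v = m4 K p (v 0) (v 1) (v 2) (v 3) := rfl

lemma S_eq (p : ℕ) (x y : V K) :
    (∑ i : Fin 8, ∑ j : Fin 8, c K p i j * x i * y j) =
      (-1:K)^(p+1) * (x 2 * y 5 + x 3 * y 6 + x 7 * y 4) +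
      (-1:K)^p * (x 5 * y 2 + x 6 * y 3 + x 4 * y 7) := by
  simp [Fin.sum_univ_eight, c, Prod.ext_iff]
  ring

lemma m2_def (p : ℕ) (x y : V K) :
    m2 K p x y = x 0 • y + y 0 • x - (x 0 * y 0) • e K 0 +
      ((-1:K)^(p+1) * (x 2 * y 5 + x 3 * y 6 + x 7 * y 4) +
       (-1:K)^p * (x 5 * y 2 + x 6 * y 3 + x 4 * y 7)) • e K 1 := by
  rw [m2, S_eq]

lemma m4_def (p : ℕ) (x y z w : V K) :
    m4 K p x y z w =
      (if p % 2 = 0 then x 5*y 2*z 3*w 6 - x 6*y 3*z 5*w 2 - x 6*y 3*z 6*w 3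
       else x 5*y 2*z 3*w 6 + x 5*y 2*z 6*w 3 - x 3*y 6*z 3*w 6) • e K 1 := by
  rcases Nat.mod_two_eq_zero_or_one p with h|h <;>
    · simp only [m4, d4, h, if_true, reduceIte]
      congr 1
      · simp [Fin.sum_univ_eight, Prod.ext_iff]
        ring

lemma mu_ne (p m : ℕ) (h2 : m ≠ 2) (h4 : m ≠ 4) (v : ℕ → V K) : mu K p m v = 0 := by
  rcases m with _|_|_|_|_|k
  · rfl
  · rfl
  · exact absurd rfl h2
  · rfl
  · exact absurd rfl h4
  · rfl

lemma mu_slot (p m t : ℕ) (v : ℕ → V K) (ht : t < m) (hv : v t = 0) : mu K p m v = 0 := by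
  rcases m with _|_|_|_|_|k
  · rfl
  · rfl
  · interval_cases t <;> simp_all [mu]
  · rfl
  · interval_cases t <;> simp_all [mu]
  · rfl

lemma sign_deg (a : Fin 8) : (-1:K)^(deg a - 1) = -1 := by
  rcases eq_or_ne a 1 with h|h <;> simp [deg, h] <;> norm_num

set_option maxHeartbeats 4000000 in
lemma assoc (p : ℕ) (x y z : V K) :
    m2 K p (m2 K p x y) z = m2 K p x (m2 K p y z) := by
  simp only [m2_def]
  funext m
  fin_cases m <;>
    · simp [e, Pi.single_apply]
      try ring

set_option maxHeartbeats 8000000 in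
lemma rel5 (p : ℕ) (x1 x2 x3 x4 x5 : V K) :
    -(m4 K p (m2 K p x1 x2) x3 x4 x5) + m4 K p x1 (m2 K p x2 x3) x4 x5
    - m4 K p x1 x2 (m2 K p x3 x4) x5 + m4 K p x1 x2 x3 (m2 K p x4 x5)
    - m2 K p (m4 K p x1 x2 x3 x4) x5 + m2 K p x1 (m4 K p x2 x3 x4 x5) = 0 := by
  rcases Nat.mod_two_eq_zero_or_one p with h|h <;>
    · simp only [m4_def, h, if_true, reduceIte, m2_def]
      funext m
      fin_cases m <;>
        · simp [e, Pi.single_apply]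
          try ring

set_option maxHeartbeats 2000000 in
lemma m4_e1 (p : ℕ) (s : K) (x y z : V K) :
    m4 K p (s • e K 1) x y z = 0 ∧ m4 K p x (s • e K 1) y z = 0 ∧
    m4 K p x y (s • e K 1) z = 0 ∧ m4 K p x y z (s • e K 1) = 0 := by
  refine ⟨?_, ?_, ?_, ?_⟩ <;>
    · rw [m4_def]
      rcases Nat.mod_two_eq_zero_or_one p with h|h <;>
        simp [h, e, Pi.single_apply]

lemma sign2 (a b : Fin 8) : (-1:K)^(deg a + deg b - 2) = 1 := by
  have h : deg a + deg b - 2 = (deg a - 1) + (deg b - 1) := by ring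
  rw [h, zpow_add₀ (by norm_num : (-1:K) ≠ 0), sign_deg, sign_deg]; norm_num

lemma sign3 (a b c : Fin 8) : (-1:K)^(deg a + deg b + deg c - 3) = -1 := by
  have h : deg a + deg b + deg c - 3 = (deg a - 1) + (deg b - 1) + (deg c - 1) := by ring
  rw [h, zpow_add₀ (by norm_num : (-1:K) ≠ 0), zpow_add₀ (by norm_num : (-1:K) ≠ 0),
    sign_deg, sign_deg, sign_deg]; norm_num

lemma m2_zero_left (p : ℕ) (y : V K) : m2 K p 0 y = 0 := by simp [m2]
lemma m2_zero_right (p : ℕ) (x : V K) : m2 K p x 0 = 0 := by simp [m2]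

lemma m4_m4_1 (p : ℕ) (x y z w a b c' : V K) :
    m4 K p (m4 K p x y z w) a b c' = 0 := by
  rw [m4_def K p x y z w]; exact (m4_e1 K p _ a b c').1
lemma m4_m4_2 (p : ℕ) (x y z w a b c' : V K) :
    m4 K p a (m4 K p x y z w) b c' = 0 := by
  rw [m4_def K p x y z w]; exact (m4_e1 K p _ a b c').2.1
lemma m4_m4_3 (p : ℕ) (x y z w a b c' : V K) :
    m4 K p a b (m4 K p x y z w) c' = 0 := by
  rw [m4_def K p x y z w]; exact (m4_e1 K p _ a b c').2.2.1
lemma m4_m4_4 (p : ℕ) (x y z w a b c' : V K) :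
    m4 K p a b c' (m4 K p x y z w) = 0 := by
  rw [m4_def K p x y z w]; exact (m4_e1 K p _ a b c').2.2.2

set_option maxHeartbeats 1000000 in
/-- `𝒜` satisfies the A∞-associativity equations: for every `d ≥ 1` and
every tuple of basis elements `e (g 0), …, e (g (d−1))`, the sum over `1 ≤ n ≤ d` and
positions `t` of the Koszul-signed compositions
`±μ^{d−n+1}(…, μ^n(arguments t,…,t+n−1), …)` vanishes, with sign `(−1)^{Σ (|x|−1)}`
over the arguments to the right of the inner block. -/
theorem stmt_10 (p : ℕ) : ∀ d : ℕ, 1 ≤ d → ∀ g : ℕ → Fin 8,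
    ∑ n ∈ Finset.Icc 1 d, ∑ t ∈ Finset.range (d - n + 1),
      ((-1 : K) ^ (∑ j ∈ Finset.Ico (t + n) d, (deg (g j) - 1))) •
        mu K p (d - n + 1) (fun i =>
          if i < t then e K (g i)
          else if i = t then mu K p n (fun j => e K (g (t + j)))
          else e K (g (i + n - 1))) = 0 := by
  intro d hd g
  by_cases h3 : d = 3
  · subst h3
    rw [show Finset.Icc 1 3 = {1,2,3} from rfl]
    rw [Finset.sum_insert (by decide), Finset.sum_insert (by decide), Finset.sum_singleton]
    norm_num [Finset.sum_range_succ]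
    simp only [show ∀ v, mu K p 1 v = 0 from fun _ => rfl,
      show ∀ v, mu K p 3 v = 0 from fun _ => rfl, smul_zero, add_zero, zero_add]
    simp only [mu2_eq]
    norm_num [sign_deg]
    rw [assoc]
    exact neg_add_cancel _
  by_cases h5 : d = 5
  · subst h5
    rw [show Finset.Icc 1 5 = {1,2,3,4,5} from rfl]
    rw [Finset.sum_insert (by decide), Finset.sum_insert (by decide),
      Finset.sum_insert (by decide), Finset.sum_insert (by decide), Finset.sum_singleton]
    norm_num [Finset.sum_range_succ]
    simp only [show ∀ v, mu K p 1 v = 0 from fun _ => rfl,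
      show ∀ v, mu K p 3 v = 0 from fun _ => rfl,
      show ∀ v, mu K p 5 v = 0 from fun _ => rfl, smul_zero, add_zero, zero_add]
    simp only [mu2_eq, mu4_eq]
    norm_num [Finset.sum_Ico_eq_sum_range, Finset.sum_range_succ]
    simp only [sign_deg, sign2, sign3]
    have h := rel5 K p (e K (g 0)) (e K (g 1)) (e K (g 2)) (e K (g 3)) (e K (g 4))
    simp only [neg_one_smul, one_smul, neg_smul]
    linear_combination (norm := module) h
  by_cases h7 : d = 7
  · subst h7
    rw [show Finset.Icc 1 7 = {1,2,3,4,5,6,7} from rfl]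
    rw [Finset.sum_insert (by decide), Finset.sum_insert (by decide),
      Finset.sum_insert (by decide), Finset.sum_insert (by decide),
      Finset.sum_insert (by decide), Finset.sum_insert (by decide), Finset.sum_singleton]
    norm_num [Finset.sum_range_succ]
    simp only [show ∀ v, mu K p 1 v = 0 from fun _ => rfl,
      show ∀ v, mu K p 3 v = 0 from fun _ => rfl,
      show ∀ v, mu K p 5 v = 0 from fun _ => rfl,
      show ∀ v, mu K p 6 v = 0 from fun _ => rfl,
      show ∀ v, mu K p 7 v = 0 from fun _ => rfl, smul_zero, add_zero, zero_add]
    simp only [mu2_eq, mu4_eq]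
    norm_num [m4_m4_1, m4_m4_2, m4_m4_3, m4_m4_4, m2_zero_left, m2_zero_right]
  · refine Finset.sum_eq_zero fun n hn => Finset.sum_eq_zero fun t ht => ?_
    rw [Finset.mem_Icc] at hn
    rw [Finset.mem_range] at ht
    by_cases hm2 : d - n + 1 = 2
    · have hn2 : n ≠ 2 := by omega
      have hn4 : n ≠ 4 := by omega
      rw [mu_slot K p (d - n + 1) t _ ht (by simp [mu_ne K p n hn2 hn4]), smul_zero]
    · by_cases hm4 : d - n + 1 = 4
      · have hn2 : n ≠ 2 := by omega
        have hn4 : n ≠ 4 := by omega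
        rw [mu_slot K p (d - n + 1) t _ ht (by simp [mu_ne K p n hn2 hn4]), smul_zero]
      · rw [mu_ne K p _ hm2 hm4, smul_zero]

end Stmt10
end
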